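/- arXiv:nlin/0306033 — 10 statements merged into one kernel-verified Lean document; each statement's English description precedes it below -/
import Mathlib

section
/- Let τ be odd with 1 ≤ τ < n. Then the simple graph H_n(τ) on vertex set E_n, in which μ and ν are adjacent if and only if d(μ,ν) = τ, is connected; moreover H_n(τ) is bipartite, with every edge joining a string of even parity to a string of odd parity. -/
/-- The parity of a binary string: the sum of its digits in `ZMod 2`. -/
def parity {n : ℕ} (μ : Fin n → ZMod 2) : ZMod 2 := ∑ i, μ i

/-- `H_n(τ)`: the simple graph on binary strings of length `n` in which two
distinct strings are adjacent iff their Hamming distance is `τ`. -/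
def hammingGraph (n τ : ℕ) : SimpleGraph (Fin n → ZMod 2) where
  Adj μ ν := μ ≠ ν ∧ hammingDist μ ν = τ
  symm := ⟨by
    intro μ ν h
    exact ⟨h.1.symm, by rw [hammingDist_comm]; exact h.2⟩⟩
  loopless := ⟨fun μ h => h.1 rfl⟩

namespace HGaux

variable {n : ℕ}

/-- differing set -/
def D (μ ν : Fin n → ZMod 2) : Finset (Fin n) := {i | μ i ≠ ν i}

lemma hd_eq (μ ν : Fin n → ZMod 2) : hammingDist μ ν = (D μ ν).card := rfl

/-- flip on a finset -/
def flip (μ : Fin n → ZMod 2) (S : Finset (Fin n)) : Fin n → ZMod 2 :=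
  fun i => if i ∈ S then μ i + 1 else μ i

lemma zmod2_add_one_ne (x y : ZMod 2) : (x + 1 ≠ y) ↔ (x = y) := by revert x y; decide

lemma D_flip (μ ν : Fin n → ZMod 2) (S : Finset (Fin n)) :
    D (flip μ S) ν = symmDiff S (D μ ν) := by
  ext i
  simp only [D, Finset.mem_filter, Finset.mem_univ, true_and, Finset.mem_symmDiff]
  simp only [flip]
  by_cases h : i ∈ S <;> simp [h, zmod2_add_one_ne]

lemma card_D_flip (μ ν : Fin n → ZMod 2) (S : Finset (Fin n)) :
    hammingDist (flip μ S) ν = (symmDiff S (D μ ν)).card := by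
  rw [hd_eq, D_flip]

lemma adj_flip (τ : ℕ) (μ : Fin n → ZMod 2) (S : Finset (Fin n)) (hS : S.card = τ)
    (hne : S.Nonempty) : (hammingGraph n τ).Adj μ (flip μ S) := by
  constructor
  · obtain ⟨i, hi⟩ := hne
    intro h
    have h1 : μ i = flip μ S i := congrFun h i
    simp only [flip, hi, if_pos] at h1
    have h2 : ∀ x : ZMod 2, x ≠ x + 1 := by decide
    exact h2 (μ i) h1
  · rw [hammingDist_comm, card_D_flip]
    have : D μ μ = ∅ := by simp [D]
    rw [this, show (∅ : Finset (Fin n)) = ⊥ from rfl, symmDiff_bot, hS]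

end HGaux

namespace HGaux2
open HGaux

variable {n : ℕ}

lemma reach_even (τ : ℕ) (hτ1 : 1 ≤ τ) (hτn : τ < n) :
    ∀ c : ℕ, Even c → ∀ μ ν : Fin n → ZMod 2, hammingDist μ ν = c →
      (hammingGraph n τ).Reachable μ ν := by
  intro c
  induction c using Nat.strong_induction_on with
  | _ c IH =>
    intro hc μ ν hd
    rcases Nat.eq_zero_or_pos c with h0 | hpos
    · subst h0
      rw [hammingDist_eq_zero] at hd
      exact hd ▸ SimpleGraph.Reachable.refl μ
    · have hc2 : 2 ≤ c := by
        rcases hc with ⟨k, hk⟩; omega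
    -- two distinct differing positions
      have hcard : 1 < (D μ ν).card := by rw [← hd_eq, hd]; omega
      obtain ⟨p, hp, q, hq, hpq⟩ := Finset.one_lt_card.mp hcard
      have hsub : (τ - 1) ≤ (Finset.univ \ {p, q} : Finset (Fin n)).card := by
        rw [Finset.card_sdiff_of_subset (Finset.subset_univ _), Finset.card_univ, Fintype.card_fin,
          Finset.card_pair hpq]
        omega
      obtain ⟨R, hR, hRcard⟩ := Finset.exists_subset_card_eq hsub
      have hpR : p ∉ R := fun h => by simpa using (hR h)
      have hqR : q ∉ R := fun h => by simpa using (hR h)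
      set S1 := insert p R with hS1
      set S2 := insert q R with hS2
      have hS1card : S1.card = τ := by
        rw [hS1, Finset.card_insert_of_notMem hpR, hRcard]; omega
      have hS2card : S2.card = τ := by
        rw [hS2, Finset.card_insert_of_notMem hqR, hRcard]; omega
      set ρ := flip μ S1 with hρ
      set σ := flip ρ S2 with hσ
      have a1 : (hammingGraph n τ).Adj μ ρ := adj_flip τ μ S1 hS1card ⟨p, Finset.mem_insert_self _ _⟩
      have a2 : (hammingGraph n τ).Adj ρ σ := adj_flip τ ρ S2 hS2card ⟨q, Finset.mem_insert_self _ _⟩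
      have hDσ : D σ ν = symmDiff (symmDiff S2 S1) (D μ ν) := by
        rw [hσ, D_flip, hρ, D_flip, symmDiff_assoc]
      have hS21 : symmDiff S2 S1 = {p, q} := by
        ext i
        simp only [Finset.mem_symmDiff, hS1, hS2, Finset.mem_insert, Finset.mem_singleton]
        constructor
        · rintro (⟨h1, h2⟩ | ⟨h1, h2⟩) <;> tauto
        · rintro (rfl | rfl)
          · exact Or.inr ⟨Or.inl rfl, fun h => by rcases h with h | h; exact hpq h; exact hpR h⟩
          · exact Or.inl ⟨Or.inl rfl, fun h => by rcases h with h | h; exact hpq h.symm; exact hqR h⟩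
      have hpqsub : ({p, q} : Finset (Fin n)) ⊆ D μ ν := by
        intro i hi
        rcases Finset.mem_insert.mp hi with rfl | hi
        · exact hp
        · exact Finset.mem_singleton.mp hi ▸ hq
      have hDσ2 : D σ ν = D μ ν \ {p, q} := by
        rw [hDσ, hS21, symmDiff_of_le hpqsub]
      have hdist : hammingDist σ ν = c - 2 := by
        rw [hd_eq, hDσ2, Finset.card_sdiff_of_subset hpqsub, Finset.card_pair hpq, ← hd_eq, hd]
      have hrest : (hammingGraph n τ).Reachable σ ν := by
        apply IH (c - 2) (by omega) (by rcases hc with ⟨k, hk⟩; exact ⟨k - 1, by omega⟩) _ _ hdist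
      exact (a1.reachable.trans a2.reachable).trans hrest

end HGaux2

namespace HGaux3
open HGaux HGaux2

variable {n : ℕ}

lemma card_symmDiff' (s t : Finset (Fin n)) :
    (symmDiff s t).card + 2 * (s ∩ t).card = s.card + t.card := by
  have h1 : symmDiff s t = (s \ t) ∪ (t \ s) := by
    ext i; simp [Finset.mem_symmDiff]
  have h2 : Disjoint (s \ t) (t \ s) := by
    apply Finset.disjoint_left.mpr
    intro a ha hb
    exact (Finset.mem_sdiff.mp ha).2 (Finset.mem_sdiff.mp hb).1
  rw [h1, Finset.card_union_of_disjoint h2]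
  have h3 := Finset.card_sdiff_add_card_inter s t
  have h4 := Finset.card_sdiff_add_card_inter t s
  rw [Finset.inter_comm] at h4
  omega

end HGaux3

theorem hammingGraph_connected_bipartite_of_odd (n τ : ℕ) (hτodd : Odd τ)
    (hτ1 : 1 ≤ τ) (hτn : τ < n) :
    (hammingGraph n τ).Connected ∧
      ∀ μ ν : Fin n → ZMod 2, (hammingGraph n τ).Adj μ ν → parity μ + parity ν = 1 := by
  constructor
  · have hpre : (hammingGraph n τ).Preconnected := by
      intro μ ν
      by_cases hc : Even (hammingDist μ ν)
      · exact HGaux2.reach_even τ hτ1 hτn _ hc μ ν rfl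
      · rw [Nat.not_even_iff_odd] at hc
        have hτle : τ ≤ (Finset.univ : Finset (Fin n)).card := by
          rw [Finset.card_univ, Fintype.card_fin]; omega
        obtain ⟨S, _, hScard⟩ := Finset.exists_subset_card_eq hτle
        have hSne : S.Nonempty := Finset.card_pos.mp (by omega)
        have a1 : (hammingGraph n τ).Adj μ (HGaux.flip μ S) := HGaux.adj_flip τ μ S hScard hSne
        have heven : Even (hammingDist (HGaux.flip μ S) ν) := by
          rw [HGaux.card_D_flip]
          have := HGaux3.card_symmDiff' S (HGaux.D μ ν)
          rw [← HGaux.hd_eq] at this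
          obtain ⟨a, ha⟩ := hτodd
          obtain ⟨b, hb⟩ := hc
          rw [Nat.even_iff]
          omega
        exact a1.reachable.trans
          (HGaux2.reach_even τ hτ1 hτn _ heven (HGaux.flip μ S) ν rfl)
    exact ⟨hpre⟩
  · rintro μ ν ⟨hne, hd⟩
    have hsum : parity μ + parity ν = ∑ i, (μ i + ν i) := by
      rw [parity, parity, ← Finset.sum_add_distrib]
    rw [hsum, ← Finset.sum_filter_add_sum_filter_not Finset.univ (fun i => μ i ≠ ν i)]
    have hzero : ∑ i ∈ Finset.univ.filter (fun i => ¬ μ i ≠ ν i), (μ i + ν i) = 0 := by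
      apply Finset.sum_eq_zero
      intro i hi
      have h : μ i = ν i := not_not.mp (Finset.mem_filter.mp hi).2
      rw [← h]
      revert hne; generalize μ i = x; intro; revert x; decide
    have hone : ∑ i ∈ Finset.univ.filter (fun i => μ i ≠ ν i), (μ i + ν i) =
        ((HGaux.D μ ν).card : ZMod 2) := by
      rw [Finset.sum_congr rfl (fun i hi => ?_), Finset.sum_const, nsmul_eq_mul, mul_one]
      · rfl
      · have h : μ i ≠ ν i := (Finset.mem_filter.mp hi).2
        have : ∀ x y : ZMod 2, x ≠ y → x + y = 1 := by decide
        exact this _ _ h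
    rw [hzero, hone, ← HGaux.hd_eq, hd, add_zero]
    obtain ⟨k, rfl⟩ := hτodd
    push_cast
    have h2 : (2 : ZMod 2) = 0 := rfl
    rw [h2]
    ring
end

section
/- Let X_a be an additive cellular automaton rule on E_n and let μ ∈ E_n lie on a cycle of X_a, i.e. X_a^p(μ) = μ for some p ≥ 1. Then all states on this cycle have the same parity: π(X_a^k(μ)) = π(μ) for every k ≥ 0. -/
/-- The additive cellular automaton rule with coefficient vector `a`:
`(X_a μ) j = ∑ i, a i * μ (j + i)`, index arithmetic modulo `n`. -/
def caRule {n : ℕ} (a : Fin n → ZMod 2) (μ : Fin n → ZMod 2) : Fin n → ZMod 2 :=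
  fun j => ∑ i, a i * μ (j + i)

lemma parity_caRule {n : ℕ} (a μ : Fin n → ZMod 2) :
    parity (caRule a μ) = (∑ i, a i) * parity μ := by
  cases n with
  | zero => simp [parity]
  | succ m =>
    simp only [parity, caRule, Finset.sum_mul]
    rw [Finset.sum_comm]
    refine Finset.sum_congr rfl fun i _ => ?_
    rw [← Finset.mul_sum]
    congr 1
    exact Fintype.sum_equiv (Equiv.addRight i) _ _ (fun j => rfl)

lemma parity_iter {n : ℕ} (a μ : Fin n → ZMod 2) (k : ℕ) :
    parity ((caRule a)^[k] μ) = (∑ i, a i) ^ k * parity μ := by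
  induction k with
  | zero => simp
  | succ k ih =>
    rw [Function.iterate_succ_apply', parity_caRule, ih, pow_succ]
    ring

theorem parity_const_on_cycle (n : ℕ) (a : Fin n → ZMod 2) (μ : Fin n → ZMod 2)
    (p : ℕ) (hp : 1 ≤ p) (hcyc : (caRule a)^[p] μ = μ) :
    ∀ k : ℕ, parity ((caRule a)^[k] μ) = parity μ := by
  intro k
  have hP : (∑ i, a i) ^ p * parity μ = parity μ := by
    rw [← parity_iter, hcyc]
  set c := ∑ i, a i with hc
  have : c = 0 ∨ c = 1 := (by decide : ∀ x : ZMod 2, x = 0 ∨ x = 1) c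
  rcases this with h | h
  · have hμ : parity μ = 0 := by
      rw [h, zero_pow (by omega)] at hP
      simpa using hP.symm
    rw [parity_iter, hμ, mul_zero]
  · rw [parity_iter, ← hc, h, one_pow, one_mul]
end

section
/- Let n ≥ 1 and let X : E_n → E_n be the left-justified rule 150, (X μ) i = μ i + μ(i+1) + μ(i+2) with index arithmetic modulo n. If n is not divisible by 3, then X is bijective (equivalently, the maximum tree height in the state transition diagram of X is 0, every state lying on a cycle). -/
/-- Left-justified rule 150: `(X μ) i = μ i + μ (i+1) + μ (i+2)`,
index arithmetic modulo `n`. -/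
def rule150 (n : ℕ) [NeZero n] (μ : Fin n → ZMod 2) : Fin n → ZMod 2 :=
  fun i => μ i + μ (i + 1) + μ (i + 2)

theorem rule150_bijective_of_not_three_dvd (n : ℕ) [NeZero n] (h3 : ¬ (3 ∣ n)) :
    Function.Bijective (rule150 n) := by
  have hcop : Nat.Coprime 3 n := (Nat.Prime.coprime_iff_not_dvd (by norm_num)).mpr h3
  -- kernel is trivial
  open Fin.CommRing in
  have hker : ∀ μ : Fin n → ZMod 2, rule150 n μ = 0 → μ = 0 := by
    intro μ hμ
    have hrec : ∀ i : Fin n, μ (i + 3) = μ i := by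
      intro i
      have h0 := congrFun hμ i
      have h1 := congrFun hμ (i + 1)
      simp only [rule150, Pi.zero_apply] at h0 h1
      have e1 : i + 1 + 1 = i + 2 := by ring
      have e2 : i + 1 + 2 = i + 3 := by ring
      rw [e1, e2] at h1
      generalize μ i = a at h0 ⊢
      generalize μ (i + 1) = b at h0 h1
      generalize μ (i + 2) = c at h0 h1
      generalize μ (i + 3) = d at h1 ⊢
      revert h0 h1
      revert a b c d
      decide
    have hk : ∀ k : ℕ, ∀ i : Fin n, μ (i + ((3 * k : ℕ) : Fin n)) = μ i := by
      intro k
      induction k with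
      | zero => intro i; simp
      | succ k ih =>
        intro i
        have e : (i + ((3 * (k + 1) : ℕ) : Fin n)) = (i + 3) + ((3 * k : ℕ) : Fin n) := by
          push_cast; ring
        rw [e, ih, hrec]
    have hconst : ∀ i : Fin n, μ i = μ 0 := by
      intro i
      rcases Nat.lt_or_ge n 2 with hn | hn
      · interval_cases n
        · exact absurd rfl (NeZero.ne 0)
        · exact congrArg μ (Subsingleton.elim i 0)
      · obtain ⟨m, -, hm⟩ := Nat.exists_mul_mod_eq_one_of_coprime hcop hn
        have key : ((3 * (i.val * m) : ℕ) : Fin n) = i := by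
          apply Fin.ext
          rw [Fin.val_natCast]
          have : 3 * (i.val * m) = i.val * (3 * m) := by ring
          rw [this, Nat.mul_mod, hm, Nat.mul_one, Nat.mod_mod_of_dvd _ dvd_rfl,
            Nat.mod_eq_of_lt i.isLt]
        calc μ i = μ (0 + ((3 * (i.val * m) : ℕ) : Fin n)) := by rw [zero_add, key]
          _ = μ 0 := hk _ 0
    have hzero : μ 0 = 0 := by
      have h0 := congrFun hμ 0
      simp only [rule150, Pi.zero_apply] at h0
      rw [hconst (0 + 1), hconst (0 + 2)] at h0
      generalize μ 0 = a at h0 ⊢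
      revert h0; revert a; decide
    funext i
    rw [hconst i, hzero]; rfl
  -- injectivity
  have hinj : Function.Injective (rule150 n) := by
    intro μ ν h
    have hsub : rule150 n (μ - ν) = 0 := by
      funext i
      have := congrFun h i
      simp only [rule150, Pi.sub_apply, Pi.zero_apply] at this ⊢
      linear_combination this
    have := hker _ hsub
    exact sub_eq_zero.mp this
  exact Finite.injective_iff_bijective.mp hinj
end

section
/- Let σ be the cyclic left shift on E_n and let X : E_n → E_n satisfy X ∘ σ = σ ∘ X. Let μ ∈ E_n have a free shift orbit (σ^j(μ) = μ implies n divides j). Suppose m ≥ 1 is the smallest positive integer such that X^m(μ) lies in the shift orbit {σ^j(μ) : j ∈ ℕ} of μ, let r be the smallest integer with 0 ≤ r < n such that σ^r(X^m(μ)) = μ (i.e. X^m(μ) = σ^{-r}(μ)), and let s be the smallest positive integer such that n divides r·s. Then μ lies on a cycle of X of period exactly m·s: X^{ms}(μ) = μ and X^k(μ) ≠ μ for all 0 < k < m·s. -/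
/-- The cyclic left shift on binary strings of length `n`: `(σ μ) i = μ (i+1)`. -/
def cyclicShift (n : ℕ) [NeZero n] (μ : Fin n → ZMod 2) : Fin n → ZMod 2 :=
  fun i => μ (i + 1)

open Fin.NatCast in
lemma cyclicShift_iter (n : ℕ) [NeZero n] (j : ℕ) (μ : Fin n → ZMod 2) :
    (cyclicShift n)^[j] μ = fun i => μ (i + (j : Fin n)) := by
  induction j with
  | zero => simp
  | succ j ih =>
    rw [Function.iterate_succ_apply', ih]
    funext i
    simp only [cyclicShift]
    congr 1
    push_cast
    rw [add_assoc, add_comm (1 : Fin n)]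

open Fin.NatCast in
lemma cyclicShift_dvd (n : ℕ) [NeZero n] (j : ℕ) (h : n ∣ j) (x : Fin n → ZMod 2) :
    (cyclicShift n)^[j] x = x := by
  rw [cyclicShift_iter]
  funext i
  have : (j : Fin n) = 0 := by
    obtain ⟨c, rfl⟩ := h
    apply Fin.ext
    simp [Fin.val_natCast]
  rw [this, add_zero]

theorem cycle_period_from_shift_basin (n : ℕ) [NeZero n]
    (X : (Fin n → ZMod 2) → (Fin n → ZMod 2))
    (hcomm : X ∘ cyclicShift n = cyclicShift n ∘ X)
    (μ : Fin n → ZMod 2)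
    (hfree : ∀ j : ℕ, (cyclicShift n)^[j] μ = μ → n ∣ j)
    (m : ℕ) (hm : 1 ≤ m)
    (hm_mem : ∃ j : ℕ, X^[m] μ = (cyclicShift n)^[j] μ)
    (hm_min : ∀ m' : ℕ, 0 < m' → m' < m → ¬ ∃ j : ℕ, X^[m'] μ = (cyclicShift n)^[j] μ)
    (r : ℕ) (hrn : r < n)
    (hr : (cyclicShift n)^[r] (X^[m] μ) = μ)
    (hr_min : ∀ r' : ℕ, r' < r → (cyclicShift n)^[r'] (X^[m] μ) ≠ μ)
    (s : ℕ) (hs : 1 ≤ s) (hdvd : n ∣ r * s)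
    (hs_min : ∀ s' : ℕ, 0 < s' → s' < s → ¬ n ∣ r * s') :
    X^[m * s] μ = μ ∧ ∀ k : ℕ, 0 < k → k < m * s → X^[k] μ ≠ μ := by
  have hc : Function.Commute X (cyclicShift n) := fun x => congrFun hcomm x
  have hcomm' : ∀ (a j : ℕ) (x : Fin n → ZMod 2),
      X^[a] ((cyclicShift n)^[j] x) = (cyclicShift n)^[j] (X^[a] x) :=
    fun a j x => (hc.iterate_iterate a j) x
  -- X^[m] μ = σ^[n-r] μ
  have hXm : X^[m] μ = (cyclicShift n)^[n - r] μ := by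
    conv_rhs => rw [← hr, ← Function.iterate_add_apply,
      Nat.sub_add_cancel hrn.le, cyclicShift_dvd n n dvd_rfl]
  -- key induction
  have key : ∀ q : ℕ, X^[q * m] μ = (cyclicShift n)^[q * (n - r)] μ := by
    intro q
    induction q with
    | zero => simp
    | succ q ih =>
      have h1 : (q + 1) * m = q * m + m := by ring
      have h2 : (q + 1) * (n - r) = (n - r) + q * (n - r) := by ring
      rw [h1, h2, Function.iterate_add_apply, hXm, hcomm', ih,
        ← Function.iterate_add_apply]
  -- from σ^[q*(n-r)] μ = μ deduce n ∣ r * q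
  have hdvd_of : ∀ q : ℕ, (cyclicShift n)^[q * (n - r)] μ = μ → n ∣ r * q := by
    intro q hq
    have h1 : n ∣ q * (n - r) := hfree _ hq
    have h2 : n ∣ q * n := dvd_mul_left n q
    have h3 : n ∣ q * n - q * (n - r) := Nat.dvd_sub h2 h1
    have h4 : q * n - q * (n - r) = q * r := by
      rw [Nat.mul_sub q n r, Nat.sub_sub_self (Nat.mul_le_mul_left q hrn.le)]
    rw [h4, mul_comm] at h3
    exact h3
  constructor
  · rw [mul_comm, key s]
    exact cyclicShift_dvd n _ (by
      rw [Nat.mul_sub s n r]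
      exact Nat.dvd_sub (dvd_mul_left n s) (by rwa [mul_comm] at hdvd)) μ
  · intro k hk0 hkms hkμ
    set q := k / m with hqdef
    set t := k % m with htdef
    have htm : t < m := Nat.mod_lt _ hm
    have hk : m * q + t = k := Nat.div_add_mod k m
    by_cases ht : t = 0
    · -- k = m * q, 0 < q < s
      have hmq : m * q = k := by omega
      have hq0 : 0 < q := by
        rcases Nat.eq_zero_or_pos q with h | h
        · rw [h, mul_zero] at hmq; omega
        · exact h
      have hqs : q < s := Nat.lt_of_mul_lt_mul_left (hmq ▸ hkms : m * q < m * s)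
      have hkq : k = q * m := by rw [← hmq, mul_comm]
      rw [hkq, key q] at hkμ
      exact hs_min q hq0 hqs (hdvd_of q hkμ)
    · -- t > 0 : X^[m-t] μ is in the shift orbit, contradicting hm_min
      have ht0 : 0 < t := Nat.pos_of_ne_zero ht
      refine hm_min (m - t) (by omega) (by omega) ⟨(q + 1) * (n - r), ?_⟩
      have h1 : (m - t) + k = (q + 1) * m := by
        have h2 : (q + 1) * m = m * q + m := by ring
        rw [h2]; omega
      calc X^[m - t] μ = X^[m - t] (X^[k] μ) := by rw [hkμ]
        _ = X^[(m - t) + k] μ := (Function.iterate_add_apply X _ _ μ).symm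
        _ = X^[(q + 1) * m] μ := by rw [h1]
        _ = (cyclicShift n)^[(q + 1) * (n - r)] μ := key (q + 1)
end

section
/- For every n ≥ 1 and every τ with 1 ≤ τ ≤ n, the characteristic polynomial of T_{n+1}(I,τ) factors as the product of the characteristic polynomials of the sum and difference of the smaller toggle matrices: charpoly(T_{n+1}(I,τ)) = charpoly(T_n(I,τ) + T_n(I,τ−1)) · charpoly(T_n(I,τ) − T_n(I,τ−1)) (matrices over ℤ). Likewise for the normalized matrices over ℚ: charpoly(T̄_{n+1}(I,τ)) = charpoly(((n+1−τ)/(n+1))·T̄_n(I,τ) + (τ/(n+1))·T̄_n(I,τ−1)) · charpoly(((n+1−τ)/(n+1))·T̄_n(I,τ) − (τ/(n+1))·T̄_n(I,τ−1)). Hence the eigenvalues of T_{n+1}(I,τ) are exactly the eigenvalues of T_n(I,τ) ± T_n(I,τ−1). -/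
/-- `T_n(I,τ)`: the toggle (mutation) matrix on binary strings of length `n`,
whose `(μ,ν)` entry is `1` if the Hamming distance between `μ` and `ν` is `τ`, else `0`. -/
def toggleMatrix (n τ : ℕ) : Matrix (Fin n → ZMod 2) (Fin n → ZMod 2) ℤ :=
  Matrix.of fun μ ν => if hammingDist μ ν = τ then 1 else 0

/-- `T̄_n(I,τ)`: the normalized toggle matrix over `ℚ`, `(1 / C(n,τ)) • T_n(I,τ)`. -/
def toggleMatrixBar (n τ : ℕ) : Matrix (Fin n → ZMod 2) (Fin n → ZMod 2) ℚ :=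
  ((n.choose τ : ℚ))⁻¹ • Matrix.of fun μ ν => if hammingDist μ ν = τ then 1 else 0

open Matrix

open Matrix

variable {m R : Type*} [Fintype m] [DecidableEq m] [CommRing R]

lemma det_fromBlocks_symm (M N : Matrix m m R) :
    (fromBlocks M N N M).det = (M + N).det * (M - N).det := by
  have key : (fromBlocks (1 : Matrix m m R) 1 0 1) * fromBlocks M N N M *
      fromBlocks (1 : Matrix m m R) (-1) 0 1 =
      fromBlocks (M + N) 0 N (M - N) := by
    ext (i|i) (j|j) <;>
      simp [fromBlocks_multiply, Matrix.mul_neg, sub_eq_add_neg, add_comm, Matrix.add_apply,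
        Matrix.neg_apply] <;> ring
  have h1 : (fromBlocks (1 : Matrix m m R) (1 : Matrix m m R) (0 : Matrix m m R) (1 : Matrix m m R)).det = 1 := by
    simp [det_fromBlocks_zero₂₁]
  have h2 : (fromBlocks (1 : Matrix m m R) (-1 : Matrix m m R) (0 : Matrix m m R) (1 : Matrix m m R)).det = 1 := by
    simp [det_fromBlocks_zero₂₁]
  have h := congrArg Matrix.det key
  rw [det_mul, det_mul, h1, h2, one_mul, mul_one, det_fromBlocks_zero₁₂] at h
  exact h

lemma charmatrix_add' (A B : Matrix m m R) :
    charmatrix (A + B) = charmatrix A - B.map Polynomial.C := by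
  ext i j
  by_cases h : i = j <;>
    simp [h, charmatrix_apply, Matrix.sub_apply, Matrix.map_apply, Matrix.add_apply] <;> ring

lemma charmatrix_sub' (A B : Matrix m m R) :
    charmatrix (A - B) = charmatrix A + B.map Polynomial.C := by
  ext i j
  by_cases h : i = j <;>
    simp [h, charmatrix_apply, Matrix.sub_apply, Matrix.map_apply, Matrix.add_apply] <;> ring

lemma charpoly_fromBlocks_symm (A B : Matrix m m R) :
    (fromBlocks A B B A).charpoly = (A + B).charpoly * (A - B).charpoly := by
  unfold Matrix.charpoly
  rw [charmatrix_fromBlocks, det_fromBlocks_symm, charmatrix_add', charmatrix_sub',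
    sub_neg_eq_add, ← sub_eq_add_neg]

lemma hammingDist_snoc {n : ℕ} (μ ν : Fin n → ZMod 2) (a b : ZMod 2) :
    hammingDist (Fin.snoc μ a : Fin (n + 1) → ZMod 2) (Fin.snoc ν b : Fin (n + 1) → ZMod 2) =
      hammingDist μ ν + if a = b then 0 else 1 := by
  classical
  simp only [hammingDist, Finset.card_filter]
  rw [Fin.sum_univ_castSucc]
  congr 1
  · apply Finset.sum_congr rfl
    intro i _
    simp [Fin.snoc_castSucc]
  · simp only [Fin.snoc_last]
    by_cases h : a = b <;> simp [h, eq_comm]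

def snocEquiv (n : ℕ) : ((Fin n → ZMod 2) ⊕ (Fin n → ZMod 2)) ≃ (Fin (n + 1) → ZMod 2) where
  toFun := Sum.elim (fun μ => Fin.snoc μ 0) (fun μ => Fin.snoc μ 1)
  invFun g := if g (Fin.last n) = 0 then .inl (Fin.init g) else .inr (Fin.init g)
  left_inv x := by
    rcases x with μ | μ <;> simp [Fin.init_snoc]
  right_inv g := by
    have hg := Fin.snoc_init_self g
    have h2 : ∀ a : ZMod 2, a = 0 ∨ a = 1 := by decide
    dsimp only
    rcases h2 (g (Fin.last n)) with h | h
    · rw [if_pos h, Sum.elim_inl, ← h]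
      exact hg
    · rw [if_neg (by rw [h]; decide), Sum.elim_inr, ← h]
      exact hg

def toggleQ (n τ : ℕ) : Matrix (Fin n → ZMod 2) (Fin n → ZMod 2) ℚ :=
  Matrix.of fun μ ν => if hammingDist μ ν = τ then 1 else 0

lemma toggle_submatrix (n τ : ℕ) (hτ1 : 1 ≤ τ) :
    (toggleMatrix (n + 1) τ).submatrix (snocEquiv n) (snocEquiv n) =
      fromBlocks (toggleMatrix n τ) (toggleMatrix n (τ - 1))
        (toggleMatrix n (τ - 1)) (toggleMatrix n τ) := by
  have key : ∀ μ ν : Fin n → ZMod 2, hammingDist μ ν + 1 = τ ↔ hammingDist μ ν = τ - 1 := by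
    intro μ ν; omega
  ext (μ|μ) (ν|ν) <;>
    simp [toggleMatrix, snocEquiv, Matrix.fromBlocks, hammingDist_snoc, key μ ν]

lemma toggleQ_submatrix (n τ : ℕ) (hτ1 : 1 ≤ τ) :
    (toggleQ (n + 1) τ).submatrix (snocEquiv n) (snocEquiv n) =
      fromBlocks (toggleQ n τ) (toggleQ n (τ - 1))
        (toggleQ n (τ - 1)) (toggleQ n τ) := by
  have key : ∀ μ ν : Fin n → ZMod 2, hammingDist μ ν + 1 = τ ↔ hammingDist μ ν = τ - 1 := by
    intro μ ν; omega
  ext (μ|μ) (ν|ν) <;>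
    simp [toggleQ, snocEquiv, Matrix.fromBlocks, hammingDist_snoc, key μ ν]

lemma choose_inv_left (n τ : ℕ) (hτn : τ ≤ n) :
    ((((n + 1).choose τ : ℚ))⁻¹ : ℚ) =
      (((n : ℚ) + 1 - (τ : ℚ)) / ((n : ℚ) + 1)) * ((n.choose τ : ℚ))⁻¹ := by
  have h0 : (0:ℚ) < ((n.choose τ : ℚ)) := by exact_mod_cast Nat.choose_pos hτn
  have h1 : (0:ℚ) < (((n + 1).choose τ : ℚ)) := by
    exact_mod_cast Nat.choose_pos (le_trans hτn (Nat.le_succ n))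
  have h2 : (0:ℚ) < (n:ℚ) + 1 := by positivity
  have key : ((n.choose τ : ℚ)) * ((n:ℚ) + 1) = (((n+1).choose τ : ℚ)) * ((n:ℚ) + 1 - (τ:ℚ)) := by
    have h := congrArg (Nat.cast : ℕ → ℚ) (Nat.choose_mul_succ_eq n τ)
    push_cast [Nat.cast_sub (by omega : τ ≤ n + 1)] at h
    linarith
  field_simp
  linear_combination key

lemma choose_inv_right (n τ : ℕ) (hτ1 : 1 ≤ τ) (hτn : τ ≤ n) :
    ((((n + 1).choose τ : ℚ))⁻¹ : ℚ) =
      ((τ : ℚ) / ((n : ℚ) + 1)) * ((n.choose (τ - 1) : ℚ))⁻¹ := by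
  have h0 : (0:ℚ) < ((n.choose (τ-1) : ℚ)) := by
    exact_mod_cast Nat.choose_pos (by omega : τ - 1 ≤ n)
  have h1 : (0:ℚ) < (((n + 1).choose τ : ℚ)) := by
    exact_mod_cast Nat.choose_pos (le_trans hτn (Nat.le_succ n))
  have h2 : (0:ℚ) < (n:ℚ) + 1 := by positivity
  have h3 : (0:ℚ) < (τ:ℚ) := by exact_mod_cast hτ1
  have key : ((n:ℚ) + 1) * ((n.choose (τ-1) : ℚ)) = (((n+1).choose τ : ℚ)) * (τ:ℚ) := by
    have h := congrArg (Nat.cast : ℕ → ℚ) (Nat.add_one_mul_choose_eq n (τ - 1))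
    rw [Nat.sub_add_cancel hτ1] at h
    push_cast at h
    linarith
  field_simp
  linear_combination key

theorem charpoly_toggleMatrix_succ (n τ : ℕ) (hn : 1 ≤ n) (hτ1 : 1 ≤ τ) (hτn : τ ≤ n) :
    (toggleMatrix (n + 1) τ).charpoly =
      (toggleMatrix n τ + toggleMatrix n (τ - 1)).charpoly *
        (toggleMatrix n τ - toggleMatrix n (τ - 1)).charpoly ∧
    (toggleMatrixBar (n + 1) τ).charpoly =
      ((((n : ℚ) + 1 - (τ : ℚ)) / ((n : ℚ) + 1)) • toggleMatrixBar n τ +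
          ((τ : ℚ) / ((n : ℚ) + 1)) • toggleMatrixBar n (τ - 1)).charpoly *
        ((((n : ℚ) + 1 - (τ : ℚ)) / ((n : ℚ) + 1)) • toggleMatrixBar n τ -
          ((τ : ℚ) / ((n : ℚ) + 1)) • toggleMatrixBar n (τ - 1)).charpoly := by
  constructor
  · have h := Matrix.charpoly_reindex (R := ℤ) (snocEquiv n).symm (toggleMatrix (n + 1) τ)
    rw [reindex_apply, Equiv.symm_symm] at h
    rw [← h, toggle_submatrix n τ hτ1, charpoly_fromBlocks_symm]
  · have h := Matrix.charpoly_reindex (R := ℚ) (snocEquiv n).symm (toggleMatrixBar (n + 1) τ)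
    rw [reindex_apply, Equiv.symm_symm] at h
    set c : ℚ := (((n + 1).choose τ : ℚ))⁻¹ with hc
    have hbar : toggleMatrixBar (n + 1) τ = c • toggleQ (n + 1) τ := rfl
    have hL : (((n : ℚ) + 1 - (τ : ℚ)) / ((n : ℚ) + 1)) • toggleMatrixBar n τ =
        c • toggleQ n τ := by
      have : toggleMatrixBar n τ = ((n.choose τ : ℚ))⁻¹ • toggleQ n τ := rfl
      rw [this, smul_smul, hc, choose_inv_left n τ hτn]
    have hR : ((τ : ℚ) / ((n : ℚ) + 1)) • toggleMatrixBar n (τ - 1) =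
        c • toggleQ n (τ - 1) := by
      have : toggleMatrixBar n (τ - 1) = ((n.choose (τ - 1) : ℚ))⁻¹ • toggleQ n (τ - 1) := rfl
      rw [this, smul_smul, hc, choose_inv_right n τ hτ1 hτn]
    rw [← h, hbar,
      show (c • toggleQ (n + 1) τ).submatrix (snocEquiv n) (snocEquiv n) =
        c • ((toggleQ (n + 1) τ).submatrix (snocEquiv n) (snocEquiv n)) from rfl,
      toggleQ_submatrix n τ hτ1, Matrix.fromBlocks_smul, charpoly_fromBlocks_symm, hL, hR]
end

section
/- Let n = 2^k with k ≥ 1 and let D : E_n → E_n be the binary difference rule (rule 60), (D μ) i = μ i + μ(i+1) with index arithmetic modulo n. Then D^n = 0 (D is nilpotent of index n, so the state transition diagram of D is a single tree rooted at the fixed point 0⃗), and for every h with 0 ≤ h ≤ n the set {μ ∈ E_n : D^h(μ) = 0⃗} has exactly 2^h elements; consequently, for 1 ≤ h ≤ n the number of states at height exactly h above 0⃗ (least h with D^h(μ) = 0⃗) is 2^{h−1}. -/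
/-- The binary difference rule (rule 60, left justified):
`(D μ) i = μ i + μ (i+1)`, index arithmetic modulo `n`. -/
def rule60 (n : ℕ) [NeZero n] (μ : Fin n → ZMod 2) : Fin n → ZMod 2 :=
  fun i => μ i + μ (i + 1)

open Fin.NatCast

section aux
variable (n : ℕ) [NeZero n]

lemma rule60_pow2 (m : ℕ) (μ : Fin n → ZMod 2) (i : Fin n) :
    (rule60 n)^[2 ^ m] μ i = μ i + μ (i + ((2 ^ m : ℕ) : Fin n)) := by
  induction m generalizing μ i with
  | zero => simp [rule60]
  | succ m ih =>
    have h2 : 2 ^ (m + 1) = 2 ^ m + 2 ^ m := by ring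
    rw [h2, Function.iterate_add_apply, ih, ih, ih]
    have hc : ((2 ^ m : ℕ) : Fin n) + ((2 ^ m : ℕ) : Fin n) = ((2 ^ m + 2 ^ m : ℕ) : Fin n) := by
      push_cast; ring
    have key : ∀ a b c : ZMod 2, (a + b) + (b + c) = a + c := by decide
    rw [add_assoc i, hc]
    exact key _ _ _

lemma rule60_zero : rule60 n 0 = 0 := by
  funext i; simp [rule60]

lemma rule60_const (μ : Fin n → ZMod 2) (hμ : rule60 n μ = 0) (i : Fin n) : μ i = μ 0 := by
  have hstep : ∀ j : Fin n, μ (j + 1) = μ j := by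
    intro j
    have := congrFun hμ j
    have h2 : ∀ a b : ZMod 2, a + b = 0 → b = a := by decide
    exact h2 _ _ this
  have key : ∀ m : ℕ, μ ((m : Fin n)) = μ 0 := by
    intro m
    induction m with
    | zero => simp
    | succ m ih =>
      have : ((m + 1 : ℕ) : Fin n) = ((m : ℕ) : Fin n) + 1 := by push_cast; ring
      rw [this, hstep]; exact ih
  have := key i.val
  rwa [Fin.cast_val_eq_self] at this

lemma rule60_fiber (s : Finset (Fin n → ZMod 2)) (a : Fin n → ZMod 2) :
    (s.filter fun μ => rule60 n μ = a).card ≤ 2 := by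
  rcases (s.filter fun μ => rule60 n μ = a).eq_empty_or_nonempty with he | ⟨μ₀, hμ₀⟩
  · simp [he]
  · rw [Finset.mem_filter] at hμ₀
    have hsub : (s.filter fun μ => rule60 n μ = a) ⊆ {μ₀, μ₀ + (fun _ => 1)} := by
      intro μ hμ
      rw [Finset.mem_filter] at hμ
      have hdiff : rule60 n (μ + μ₀) = 0 := by
        funext i
        have h1 := congrFun hμ.2 i
        have h2 := congrFun hμ₀.2 i
        simp only [rule60, Pi.add_apply] at *
        have : ∀ p q r s t : ZMod 2, p + q = t → r + s = t → (p + r) + (q + s) = 0 := by decide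
        exact this _ _ _ _ _ h1 h2
      have hconst := rule60_const n _ hdiff
      have hcase : ∀ c : ZMod 2, c = 0 ∨ c = 1 := by decide
      have hsolve : ∀ x y c : ZMod 2, x + y = c → x = y + c := by decide
      simp only [Finset.mem_insert, Finset.mem_singleton]
      rcases hcase ((μ + μ₀) 0) with hc | hc
      · left
        funext i
        have := hconst i; rw [hc] at this
        simpa using hsolve _ _ _ this
      · right
        funext i
        have := hconst i; rw [hc] at this
        simpa using hsolve _ _ _ this
    calc (s.filter fun μ => rule60 n μ = a).card ≤ ({μ₀, μ₀ + (fun _ => 1)} : Finset _).card :=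
          Finset.card_le_card hsub
      _ ≤ 2 := Finset.card_insert_le _ _ |>.trans (by simp)

lemma rule60_card_step (h : ℕ) :
    (Finset.univ.filter fun μ : Fin n → ZMod 2 => (rule60 n)^[h+1] μ = 0).card ≤
    2 * (Finset.univ.filter fun μ : Fin n → ZMod 2 => (rule60 n)^[h] μ = 0).card := by
  set s := Finset.univ.filter fun μ : Fin n → ZMod 2 => (rule60 n)^[h+1] μ = 0 with hs
  have himg : s.image (rule60 n) ⊆
      Finset.univ.filter fun μ : Fin n → ZMod 2 => (rule60 n)^[h] μ = 0 := by
    intro ν hν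
    rw [Finset.mem_image] at hν
    obtain ⟨μ, hμ, rfl⟩ := hν
    rw [hs, Finset.mem_filter] at hμ
    rw [Finset.mem_filter]
    exact ⟨Finset.mem_univ _, by rw [← Function.iterate_succ_apply]; exact hμ.2⟩
  calc s.card ≤ 2 * (s.image (rule60 n)).card :=
        Finset.card_le_mul_card_image _ 2 (fun a _ => rule60_fiber n s a)
    _ ≤ 2 * _ := Nat.mul_le_mul_left 2 (Finset.card_le_card himg)

lemma rule60_card_chain (j h : ℕ) :
    (Finset.univ.filter fun μ : Fin n → ZMod 2 => (rule60 n)^[h+j] μ = 0).card ≤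
    2 ^ j * (Finset.univ.filter fun μ : Fin n → ZMod 2 => (rule60 n)^[h] μ = 0).card := by
  induction j with
  | zero => simp
  | succ j ih =>
    have h1 : h + (j + 1) = (h + j) + 1 := by ring
    rw [h1]
    refine le_trans (rule60_card_step n (h + j)) ?_
    calc 2 * (Finset.univ.filter
          fun μ : Fin n → ZMod 2 => (rule60 n)^[h+j] μ = 0).card
        ≤ 2 * (2 ^ j * (Finset.univ.filter
          fun μ : Fin n → ZMod 2 => (rule60 n)^[h] μ = 0).card) := Nat.mul_le_mul_left 2 ih
      _ = 2 ^ (j+1) * (Finset.univ.filter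
          fun μ : Fin n → ZMod 2 => (rule60 n)^[h] μ = 0).card := by ring

end aux

theorem rule60_tree_structure (n k : ℕ) [NeZero n] (hk : 1 ≤ k) (hn : n = 2 ^ k) :
    (∀ μ : Fin n → ZMod 2, (rule60 n)^[n] μ = 0) ∧
    (∀ h : ℕ, h ≤ n →
      (Finset.univ.filter fun μ : Fin n → ZMod 2 => (rule60 n)^[h] μ = 0).card = 2 ^ h) ∧
    (∀ h : ℕ, 1 ≤ h → h ≤ n →
      (Finset.univ.filter fun μ : Fin n → ZMod 2 =>
        (rule60 n)^[h] μ = 0 ∧ (rule60 n)^[h - 1] μ ≠ 0).card = 2 ^ (h - 1)) := by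
  have part1 : ∀ μ : Fin n → ZMod 2, (rule60 n)^[n] μ = 0 := by
    intro μ
    funext i
    have := rule60_pow2 n k μ i
    rw [← hn] at this
    rw [this]
    have : ((n : ℕ) : Fin n) = 0 := by simp
    rw [this, add_zero]
    exact CharTwo.add_self_eq_zero _
  have hcard : Fintype.card (Fin n → ZMod 2) = 2 ^ n := by
    simp [Fintype.card_fun]
  have c0 : (Finset.univ.filter fun μ : Fin n → ZMod 2 => (rule60 n)^[0] μ = 0).card = 1 := by
    simp only [Function.iterate_zero, id_eq]
    rw [Finset.card_eq_one]; refine ⟨0, ?_⟩; ext μ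
    rw [Finset.mem_singleton]; exact ⟨fun h => (Finset.mem_filter.mp h).2, fun h => Finset.mem_filter.mpr ⟨Finset.mem_univ _, h⟩⟩
  have cupper : ∀ h : ℕ,
      (Finset.univ.filter fun μ : Fin n → ZMod 2 => (rule60 n)^[h] μ = 0).card ≤ 2 ^ h := by
    intro h
    induction h with
    | zero => rw [c0]; norm_num
    | succ h ih =>
      calc _ ≤ 2 * _ := rule60_card_step n h
        _ ≤ 2 * 2 ^ h := by omega
        _ = 2 ^ (h + 1) := by ring
  have cn : (Finset.univ.filter fun μ : Fin n → ZMod 2 => (rule60 n)^[n] μ = 0).card = 2 ^ n := by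
    rw [Finset.filter_true_of_mem (fun μ _ => part1 μ), Finset.card_univ, hcard]
  have part2 : ∀ h : ℕ, h ≤ n →
      (Finset.univ.filter fun μ : Fin n → ZMod 2 => (rule60 n)^[h] μ = 0).card = 2 ^ h := by
    intro h hh
    refine le_antisymm (cupper h) ?_
    have hchain := rule60_card_chain n (n - h) h
    rw [show h + (n - h) = n by omega, cn] at hchain
    have hsplit : 2 ^ n = 2 ^ (n - h) * 2 ^ h := by
      rw [← pow_add]; congr 1; omega
    rw [hsplit] at hchain
    exact Nat.le_of_mul_le_mul_left hchain (by positivity)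
  refine ⟨part1, part2, ?_⟩
  intro h h1 hh
  have hsub : (Finset.univ.filter fun μ : Fin n → ZMod 2 => (rule60 n)^[h-1] μ = 0) ⊆
      (Finset.univ.filter fun μ : Fin n → ZMod 2 => (rule60 n)^[h] μ = 0) := by
    intro μ hμ
    rw [Finset.mem_filter] at hμ ⊢
    refine ⟨Finset.mem_univ _, ?_⟩
    rw [show h = (h - 1) + 1 by omega, Function.iterate_succ_apply', hμ.2, rule60_zero]
  have hset : (Finset.univ.filter fun μ : Fin n → ZMod 2 =>
        (rule60 n)^[h] μ = 0 ∧ (rule60 n)^[h - 1] μ ≠ 0) =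
      (Finset.univ.filter fun μ : Fin n → ZMod 2 => (rule60 n)^[h] μ = 0) \
      (Finset.univ.filter fun μ : Fin n → ZMod 2 => (rule60 n)^[h-1] μ = 0) := by
    ext μ
    simp only [Finset.mem_filter, Finset.mem_sdiff, Finset.mem_univ, true_and]
  rw [hset, Finset.card_sdiff_of_subset hsub, part2 h hh, part2 (h-1) (by omega)]
  have : 2 ^ h = 2 * 2 ^ (h - 1) := by
    rw [← pow_succ']; congr 1; omega
  omega
end

section
/- Let n = 2^k with k ≥ 1, let D : E_n → E_n be the binary difference rule, and define the height class map f : E_n → Fin (n+1) by f(μ) = the least h with D^h(μ) = 0⃗ (well defined since D^n = 0). Define the rational (n+1)×(n+1) matrix T̄ by T̄_{i,j} = (number of pairs (μ,η) with μ,η ∈ E_n, f(μ) = j, η of weight 1, and f(μ+η) = i) divided by (n · |f⁻¹(j)|). Then the characteristic polynomial of T̄ is λ^{n−1}(λ² − 1), i.e. charpoly(T̄) = X^{n+1} − X^{n−1}. -/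
/-- The weight of a binary string: the number of positions equal to `1`. -/
def weight {n : ℕ} (η : Fin n → ZMod 2) : ℕ :=
  (Finset.univ.filter fun i => η i = 1).card

section aux
open Fin.NatCast
variable (n : ℕ) [NeZero n]

lemma rule60_add (μ η : Fin n → ZMod 2) :
    rule60 n (μ + η) = rule60 n μ + rule60 n η := by
  funext i; simp only [rule60, Pi.add_apply]; ring

lemma rule60_iter_zero (m : ℕ) : (rule60 n)^[m] 0 = 0 :=
  Function.iterate_fixed (rule60_zero n) m

lemma rule60_iter_add (m : ℕ) (μ η : Fin n → ZMod 2) :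
    (rule60 n)^[m] (μ + η) = (rule60 n)^[m] μ + (rule60 n)^[m] η := by
  induction m generalizing μ η with
  | zero => rfl
  | succ m ih =>
      rw [Function.iterate_succ_apply, Function.iterate_succ_apply,
        Function.iterate_succ_apply, rule60_add, ih]

lemma rule60_iter_pow_two (j : ℕ) (μ : Fin n → ZMod 2) (i : Fin n) :
    (rule60 n)^[2 ^ j] μ i = μ i + μ (i + (2 ^ j : ℕ)) := by
  induction j generalizing μ i with
  | zero => simp [rule60]
  | succ j ih =>
      have h2 : 2 ^ (j + 1) = 2 ^ j + 2 ^ j := by ring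
      rw [h2, Function.iterate_add_apply, ih, ih, ih]
      have hc : ((2 ^ j + 2 ^ j : ℕ) : Fin n) = ((2 ^ j : ℕ) : Fin n) + ((2 ^ j : ℕ) : Fin n) := by
        push_cast; ring
      rw [hc, ← add_assoc i]
      have : ∀ a b c : ZMod 2, a + b + (b + c) = a + c := by decide
      exact this _ _ _

lemma rule60_iter_pow_two_sub_one (j : ℕ) (μ : Fin n → ZMod 2) (i : Fin n) :
    (rule60 n)^[2 ^ j - 1] μ i = ∑ t ∈ Finset.range (2 ^ j), μ (i + (t : ℕ)) := by
  induction j generalizing μ i with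
  | zero => simp
  | succ j ih =>
      have h2 : 2 ^ (j + 1) - 1 = 2 ^ j + (2 ^ j - 1) := by
        have := Nat.one_le_two_pow (n := j); omega
      rw [h2, Function.iterate_add_apply, rule60_iter_pow_two, ih, ih,
        show 2 ^ (j + 1) = 2 ^ j + 2 ^ j by ring, Finset.sum_range_add]
      congr 1
      apply Finset.sum_congr rfl
      intro t _
      congr 1
      push_cast
      exact add_assoc _ _ _

lemma rule60_iter_n (k : ℕ) (hn : n = 2 ^ k) (μ : Fin n → ZMod 2) :
    (rule60 n)^[n] μ = 0 := by
  subst hn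
  funext i
  rw [rule60_iter_pow_two]
  simp only [Fin.natCast_self, add_zero]
  exact CharTwo.add_self_eq_zero _

lemma rule60_iter_pred (k : ℕ) (hn : n = 2 ^ k) (μ : Fin n → ZMod 2) :
    (rule60 n)^[n - 1] μ = fun _ => ∑ t, μ t := by
  subst hn
  funext i
  rw [rule60_iter_pow_two_sub_one]
  rw [← Fin.sum_univ_eq_sum_range (fun t => μ (i + (t : ℕ)))]
  simp only [Fin.cast_val_eq_self]
  exact Fintype.sum_equiv (Equiv.addLeft i) _ _ (fun s => rfl)

omit [NeZero n] in
lemma sum_eq_weight_cast (η : Fin n → ZMod 2) :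
    ∑ t, η t = ((Finset.univ.filter fun i => η i = 1).card : ZMod 2) := by
  rw [← Finset.sum_filter_add_sum_filter_not Finset.univ (fun i => η i = 1)]
  have h1 : ∑ t ∈ Finset.univ.filter fun i => η i = 1, η t
      = ((Finset.univ.filter fun i => η i = 1).card : ZMod 2) := by
    rw [Finset.sum_congr rfl (fun x hx => (Finset.mem_filter.1 hx).2)]
    simp [mul_one]
  have h0 : ∑ t ∈ Finset.univ.filter fun i => ¬ η i = 1, η t = 0 := by
    apply Finset.sum_eq_zero
    intro x hx
    have h := (Finset.mem_filter.1 hx).2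
    have h2 : ∀ a : ZMod 2, ¬ a = 1 → a = 0 := by decide
    exact h2 _ h
  rw [h1, h0, add_zero]

lemma card_weight_one :
    (Finset.univ.filter fun η : Fin n → ZMod 2 => weight η = 1).card = n := by
  classical
  have h10 : (1 : ZMod 2) ≠ 0 := by decide
  have himg : (Finset.univ.filter fun η : Fin n → ZMod 2 => weight η = 1)
      = Finset.univ.image (fun t : Fin n => (fun i => if i = t then 1 else 0 : Fin n → ZMod 2)) := by
    ext η
    simp only [Finset.mem_filter, Finset.mem_univ, true_and, Finset.mem_image]
    constructor
    · intro hw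
      obtain ⟨t, ht⟩ := Finset.card_eq_one.1 hw
      refine ⟨t, ?_⟩
      funext i
      by_cases hi : i = t
      · subst hi
        have : i ∈ Finset.univ.filter fun j => η j = 1 := ht ▸ Finset.mem_singleton_self i
        simpa [if_pos rfl] using (Finset.mem_filter.1 this).2.symm
      · have : i ∉ Finset.univ.filter fun j => η j = 1 := by
          rw [ht]; simpa using hi
        have h2 : ¬ η i = 1 := by simpa using this
        have h3 : ∀ a : ZMod 2, ¬ a = 1 → a = 0 := by decide
        simp [if_neg hi, h3 _ h2]
    · rintro ⟨t, rfl⟩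
      have : (Finset.univ.filter fun i : Fin n => (if i = t then (1:ZMod 2) else 0) = 1) = {t} := by
        ext i
        by_cases hi : i = t <;> simp [hi, h10]
      rw [weight, this, Finset.card_singleton]
  rw [himg, Finset.card_image_of_injective _ ?_, Finset.card_univ, Fintype.card_fin]
  intro a b hab
  have := congr_fun hab a
  by_cases h : a = b
  · exact h
  · simp [if_neg h] at this

end aux

lemma my_eval_charpoly {N : Type*} [DecidableEq N] [Fintype N] (M : Matrix N N ℚ) (r : ℚ) :
    (Matrix.charpoly M).eval r = (r • (1 : Matrix N N ℚ) - M).det := by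
  rw [Matrix.charpoly, ← Polynomial.coe_evalRingHom, RingHom.map_det]
  congr 1
  ext i j
  by_cases h : i = j <;>
    simp [h, Matrix.charmatrix_apply, Matrix.one_apply, Matrix.diagonal_apply]

lemma charpoly_aux (m : ℕ) (hm : 2 ≤ m) (p : Fin (m + 1) → ℚ)
    (hlast : p (Fin.last m) = 0) (hsum : ∑ i, p i = 1) :
    Matrix.charpoly (Matrix.of fun i j : Fin (m + 1) =>
      if j = Fin.last m then p i else if i = Fin.last m then 1 else 0) =
    Polynomial.X ^ (m + 1) - Polynomial.X ^ (m - 1) := by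
  set M : Matrix (Fin (m + 1)) (Fin (m + 1)) ℚ := Matrix.of fun i j =>
    if j = Fin.last m then p i else if i = Fin.last m then 1 else 0 with hM
  apply Polynomial.funext
  intro x
  rw [my_eval_charpoly]
  simp only [Polynomial.eval_sub, Polynomial.eval_pow, Polynomial.eval_X]
  rcases eq_or_ne x 0 with rfl | hx
  · rw [zero_smul, zero_sub, Matrix.det_neg]
    have h01 : (⟨0, by omega⟩ : Fin (m + 1)) ≠ ⟨1, by omega⟩ := by simp [Fin.ext_iff]
    have hc : ∀ i, M i ⟨0, by omega⟩ = M i ⟨1, by omega⟩ := by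
      intro i
      have h0 : (⟨0, by omega⟩ : Fin (m + 1)) ≠ Fin.last m := by simp [Fin.ext_iff]; omega
      have h1 : (⟨1, by omega⟩ : Fin (m + 1)) ≠ Fin.last m := by simp [Fin.ext_iff]; omega
      rw [hM]
      simp only [Matrix.of_apply, if_neg h0, if_neg h1]
    rw [Matrix.det_zero_of_column_eq h01 hc]
    rw [zero_pow (by omega : m + 1 ≠ 0), zero_pow (by omega : m - 1 ≠ 0)]
    ring
  · have key : x • (1 : Matrix (Fin (m + 1)) (Fin (m + 1)) ℚ) - M = x • (1 - x⁻¹ • M) := by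
      rw [smul_sub, smul_smul, mul_inv_cancel₀ hx, one_smul]
    rw [key, Matrix.det_smul, Fintype.card_fin]
    set U : Matrix (Fin (m + 1)) (Fin 2) ℚ :=
      Matrix.of fun i a => if a = 0 then (if i = Fin.last m then 1 else 0) else p i with hU
    set V : Matrix (Fin 2) (Fin (m + 1)) ℚ :=
      Matrix.of fun a j => if a = 0 then (if j = Fin.last m then 0 else x⁻¹)
        else (if j = Fin.last m then x⁻¹ else 0) with hV
    have hUV : x⁻¹ • M = U * V := by
      ext i j
      rw [Matrix.mul_apply, Fin.sum_univ_two]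
      by_cases hj : j = Fin.last m <;> by_cases hi : i = Fin.last m <;>
        simp [hM, hU, hV, hj, hi, hlast] <;> ring
    rw [hUV, Matrix.det_one_sub_mul_comm]
    have hVU : V * U = Matrix.of fun a b : Fin 2 => if a = b then 0 else x⁻¹ := by
      ext a b
      rw [Matrix.mul_apply]
      fin_cases a <;> fin_cases b <;>
        simp only [hU, hV, Matrix.of_apply, Fin.mk_one, Fin.mk_zero, Fin.zero_eta, Fin.one_eq_zero_iff,
          if_true, if_false, one_ne_zero, Fin.isValue]
      · refine (Finset.sum_eq_zero fun j _ => ?_).trans (by simp)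
        by_cases hj : j = Fin.last m <;> simp [hj]
      · have e1 : ∀ j : Fin (m+1), (if j = Fin.last m then (0:ℚ) else x⁻¹) * p j = x⁻¹ * p j := by
          intro j; by_cases hj : j = Fin.last m <;> simp [hj, hlast]
        rw [Finset.sum_congr rfl fun j _ => e1 j, ← Finset.mul_sum, hsum, mul_one]
        simp
      · have e1 : ∀ j : Fin (m+1), (if j = Fin.last m then x⁻¹ else (0:ℚ)) *
            (if j = Fin.last m then 1 else 0) = if j = Fin.last m then x⁻¹ else 0 := by
          intro j; by_cases hj : j = Fin.last m <;> simp [hj]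
        rw [Finset.sum_congr rfl fun j _ => e1 j, Finset.sum_ite_eq' Finset.univ (Fin.last m)]
        simp
      · have e1 : ∀ j : Fin (m+1), (if j = Fin.last m then x⁻¹ else (0:ℚ)) * p j =
            if j = Fin.last m then x⁻¹ * p j else 0 := by
          intro j; by_cases hj : j = Fin.last m <;> simp [hj]
        rw [Finset.sum_congr rfl fun j _ => e1 j, Finset.sum_ite_eq' Finset.univ (Fin.last m)]
        simp [hlast]
    rw [hVU]
    have hdet2 : (1 - Matrix.of fun a b : Fin 2 => if a = b then (0:ℚ) else x⁻¹).det
        = 1 - x⁻¹ * x⁻¹ := by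
      rw [Matrix.det_fin_two]
      simp [Matrix.one_apply]
    rw [hdet2]
    obtain ⟨l, rfl⟩ : ∃ l, m = l + 2 := ⟨m - 2, by omega⟩
    have hl : l + 2 - 1 = l + 1 := rfl
    rw [hl]
    field_simp
    ring

theorem charpoly_rule60_mutation_matrix (n k : ℕ) [NeZero n] (hk : 1 ≤ k)
    (hn : n = 2 ^ k) (f : (Fin n → ZMod 2) → Fin (n + 1))
    (hf : ∀ μ : Fin n → ZMod 2,
      (rule60 n)^[(f μ : ℕ)] μ = 0 ∧ ∀ h : ℕ, h < (f μ : ℕ) → (rule60 n)^[h] μ ≠ 0) :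
    Matrix.charpoly (Matrix.of fun i j : Fin (n + 1) =>
      ((Finset.univ.filter fun q : (Fin n → ZMod 2) × (Fin n → ZMod 2) =>
          f q.1 = j ∧ weight q.2 = 1 ∧ f (q.1 + q.2) = i).card : ℚ) /
        ((n : ℚ) * ((Finset.univ.filter fun μ : Fin n → ZMod 2 => f μ = j).card : ℚ))) =
      Polynomial.X ^ (n + 1) - Polynomial.X ^ (n - 1) := by
  have hn2 : 2 ≤ n := by
    rw [hn]
    calc 2 = 2 ^ 1 := rfl
    _ ≤ 2 ^ k := Nat.pow_le_pow_right (by norm_num) hk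
  have hnpos : 0 < n := by omega
  set L := Fin.last n with hL
  have hLval : (L : ℕ) = n := rfl
  -- characterization of f
  have hf_eq : ∀ (μ : Fin n → ZMod 2) (j : Fin (n+1)),
      (rule60 n)^[(j:ℕ)] μ = 0 → (∀ h < (j:ℕ), (rule60 n)^[h] μ ≠ 0) → f μ = j := by
    intro μ j h1 h2
    by_contra hne
    rcases Nat.lt_or_ge (f μ : ℕ) (j : ℕ) with hlt | hge
    · exact h2 _ hlt (hf μ).1
    · have hlt2 : (j : ℕ) < (f μ : ℕ) := by
        rcases Nat.eq_or_lt_of_le hge with he | hl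
        · exact absurd (Fin.ext he.symm) hne
        · exact hl
      exact (hf μ).2 _ hlt2 h1
  have hf_last : ∀ μ : Fin n → ZMod 2, f μ = L ↔ ∑ t, μ t = 1 := by
    intro μ
    constructor
    · intro h
      have h2 := (hf μ).2 (n - 1) (by rw [h, hLval]; omega)
      rw [rule60_iter_pred n k hn] at h2
      by_contra hs
      have h3 : ∀ a : ZMod 2, ¬ a = 1 → a = 0 := by decide
      exact h2 (by funext t; exact h3 _ hs)
    · intro hs
      apply hf_eq μ L
      · rw [hLval]; exact rule60_iter_n n k hn μ
      · rw [hLval]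
        intro h hh hc
        have hz : (rule60 n)^[n - 1] μ = 0 := by
          have harith : n - 1 = (n - 1 - h) + h := by omega
          rw [harith, Function.iterate_add_apply, hc, rule60_iter_zero]
        rw [rule60_iter_pred n k hn] at hz
        have := congr_fun hz ⟨0, hnpos⟩
        rw [hs] at this
        exact one_ne_zero this
  have hsum_ne : ∀ μ : Fin n → ZMod 2, f μ ≠ L → ∑ t, μ t = 0 := by
    intro μ h
    have h3 : ∀ a : ZMod 2, ¬ a = 1 → a = 0 := by decide
    exact h3 _ (fun hs => h ((hf_last μ).2 hs))
  have hw1 : ∀ η : Fin n → ZMod 2, weight η = 1 → ∑ t, η t = 1 := by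
    intro η hw
    rw [sum_eq_weight_cast]
    rw [weight] at hw
    rw [hw]
    norm_num
  -- nonemptiness of fibers
  have hcard_ne : ∀ j : Fin (n+1),
      (Finset.univ.filter fun μ : Fin n → ZMod 2 => f μ = j).card ≠ 0 := by
    intro j
    set e0 : Fin n → ZMod 2 := fun i => if i = ⟨0, hnpos⟩ then 1 else 0 with he0
    have hse : ∑ t, e0 t = 1 := by
      rw [he0, Finset.sum_ite_eq' Finset.univ]
      simp
    set μ := (rule60 n)^[n - (j:ℕ)] e0 with hμ
    have hfj : f μ = j := by
      apply hf_eq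
      · rw [hμ, ← Function.iterate_add_apply,
          show (j:ℕ) + (n - (j:ℕ)) = n by have := j.isLt; omega]
        exact rule60_iter_n n k hn e0
      · intro h hh hc
        rw [hμ, ← Function.iterate_add_apply] at hc
        have hm1 : h + (n - (j:ℕ)) ≤ n - 1 := by have := j.isLt; omega
        have hz : (rule60 n)^[n - 1] e0 = 0 := by
          have harith : n - 1 = (n - 1 - (h + (n - (j:ℕ)))) + (h + (n - (j:ℕ))) := by omega
          rw [harith, Function.iterate_add_apply, hc, rule60_iter_zero]
        rw [rule60_iter_pred n k hn] at hz
        have := congr_fun hz ⟨0, hnpos⟩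
        rw [hse] at this
        exact one_ne_zero this
    rw [← Nat.pos_iff_ne_zero]  -- may need adjusting
    apply Finset.card_pos.2
    exact ⟨μ, Finset.mem_filter.2 ⟨Finset.mem_univ _, hfj⟩⟩
  -- counting lemmas
  have hprod : ∀ j : Fin (n+1),
      (Finset.univ.filter fun q : (Fin n → ZMod 2) × (Fin n → ZMod 2) =>
        f q.1 = j ∧ weight q.2 = 1).card
      = (Finset.univ.filter fun μ : Fin n → ZMod 2 => f μ = j).card * n := by
    intro j
    have hsplit : (Finset.univ.filter fun q : (Fin n → ZMod 2) × (Fin n → ZMod 2) =>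
        f q.1 = j ∧ weight q.2 = 1)
        = (Finset.univ.filter fun μ : Fin n → ZMod 2 => f μ = j) ×ˢ
          (Finset.univ.filter fun η : Fin n → ZMod 2 => weight η = 1) := by
      ext q
      simp [Finset.mem_filter, Finset.mem_product]
    rw [hsplit, Finset.card_product, card_weight_one]
  have hcount0 : ∀ i j : Fin (n+1), j ≠ L → i ≠ L →
      (Finset.univ.filter fun q : (Fin n → ZMod 2) × (Fin n → ZMod 2) =>
        f q.1 = j ∧ weight q.2 = 1 ∧ f (q.1 + q.2) = i).card = 0 := by
    intro i j hj hi
    rw [Finset.card_eq_zero, Finset.filter_eq_empty_iff]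
    rintro q -
    rintro ⟨h1, h2, h3⟩
    have hfL : f (q.1 + q.2) = L := by
      apply (hf_last _).2
      have : ∑ t, (q.1 + q.2) t = ∑ t, q.1 t + ∑ t, q.2 t := by
        simp [Finset.sum_add_distrib]
      rw [this, hsum_ne q.1 (h1 ▸ hj), hw1 q.2 h2, zero_add]
    exact hi (h3 ▸ hfL)
  have hcountn : ∀ j : Fin (n+1), j ≠ L →
      (Finset.univ.filter fun q : (Fin n → ZMod 2) × (Fin n → ZMod 2) =>
        f q.1 = j ∧ weight q.2 = 1 ∧ f (q.1 + q.2) = L).card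
      = (Finset.univ.filter fun μ : Fin n → ZMod 2 => f μ = j).card * n := by
    intro j hj
    rw [← hprod j]
    congr 1
    apply Finset.filter_congr
    rintro q -
    constructor
    · rintro ⟨h1, h2, h3⟩; exact ⟨h1, h2⟩
    · rintro ⟨h1, h2⟩
      refine ⟨h1, h2, ?_⟩
      apply (hf_last _).2
      have : ∑ t, (q.1 + q.2) t = ∑ t, q.1 t + ∑ t, q.2 t := by
        simp [Finset.sum_add_distrib]
      rw [this, hsum_ne q.1 (h1 ▸ hj), hw1 q.2 h2, zero_add]
  have hplast0 :
      (Finset.univ.filter fun q : (Fin n → ZMod 2) × (Fin n → ZMod 2) =>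
        f q.1 = L ∧ weight q.2 = 1 ∧ f (q.1 + q.2) = L).card = 0 := by
    rw [Finset.card_eq_zero, Finset.filter_eq_empty_iff]
    rintro q -
    rintro ⟨h1, h2, h3⟩
    have hs1 : ∑ t, q.1 t = 1 := (hf_last q.1).1 h1
    have hsq : ∑ t, (q.1 + q.2) t = 0 := by
      have : ∑ t, (q.1 + q.2) t = ∑ t, q.1 t + ∑ t, q.2 t := by
        simp [Finset.sum_add_distrib]
      rw [this, hs1, hw1 q.2 h2]
      decide
    have := (hf_last _).1 h3
    rw [hsq] at this
    exact one_ne_zero this.symm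
  have hsump : ∑ i : Fin (n+1),
      (Finset.univ.filter fun q : (Fin n → ZMod 2) × (Fin n → ZMod 2) =>
        f q.1 = L ∧ weight q.2 = 1 ∧ f (q.1 + q.2) = i).card
      = (Finset.univ.filter fun μ : Fin n → ZMod 2 => f μ = L).card * n := by
    rw [← hprod L]
    rw [Finset.card_eq_sum_card_fiberwise
      (f := fun q : (Fin n → ZMod 2) × (Fin n → ZMod 2) => f (q.1 + q.2))
      (t := Finset.univ) (fun x _ => Finset.mem_univ _)]
    apply Finset.sum_congr rfl
    intro i _
    rw [Finset.filter_filter]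
    congr 1
    ext q
    simp only [Finset.mem_filter, Finset.mem_univ, true_and, and_assoc]
  -- rewrite the matrix
  have hMeq : (Matrix.of fun i j : Fin (n + 1) =>
      ((Finset.univ.filter fun q : (Fin n → ZMod 2) × (Fin n → ZMod 2) =>
          f q.1 = j ∧ weight q.2 = 1 ∧ f (q.1 + q.2) = i).card : ℚ) /
        ((n : ℚ) * ((Finset.univ.filter fun μ : Fin n → ZMod 2 => f μ = j).card : ℚ)))
      = Matrix.of fun i j : Fin (n + 1) =>
        if j = L then
          ((Finset.univ.filter fun q : (Fin n → ZMod 2) × (Fin n → ZMod 2) =>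
            f q.1 = L ∧ weight q.2 = 1 ∧ f (q.1 + q.2) = i).card : ℚ) /
          ((n : ℚ) * ((Finset.univ.filter fun μ : Fin n → ZMod 2 => f μ = L).card : ℚ))
        else if i = L then 1 else 0 := by
    ext i j
    simp only [Matrix.of_apply]
    by_cases hj : j = L
    · rw [if_pos hj, hj]
    · rw [if_neg hj]
      by_cases hi : i = L
      · rw [if_pos hi, hi, hcountn j hj]
        have hc : ((Finset.univ.filter fun μ : Fin n → ZMod 2 => f μ = j).card : ℚ) ≠ 0 := by
          exact_mod_cast hcard_ne j
        have hnq : (n : ℚ) ≠ 0 := by positivity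
        push_cast
        field_simp
      · rw [if_neg hi, hcount0 i j hj hi]
        simp
  rw [hMeq]
  exact charpoly_aux n hn2 _
    (by rw [hplast0]; simp)
    (by
      rw [← Finset.sum_div]
      rw [← Nat.cast_sum]
      rw [hsump]
      have hc : ((Finset.univ.filter fun μ : Fin n → ZMod 2 => f μ = L).card : ℚ) ≠ 0 := by
        exact_mod_cast hcard_ne L
      have hnq : (n : ℚ) ≠ 0 := by positivity
      push_cast
      field_simp)
end

section
/- Let R be a commutative ring, let m ≤ n, and let A be an n×m matrix, B an m×n matrix, and C an m×m matrix over R. Let M be the (n+m)×(n+m) block matrix M = [[0, A],[B, C]]. Then the characteristic polynomial of M satisfies charpoly(M) = X^{n−m} · det(X²·1_m − X·C' − (B·A)'), where the determinant is of an m×m matrix over R[X], 1_m is the identity, and C', (BA)' denote the images of C and B·A under the coefficient embedding R → R[X]. -/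
open Polynomial Matrix

theorem charpoly_block_zero_A_B_C (R : Type*) [CommRing R] (m n : ℕ) (hmn : m ≤ n)
    (A : Matrix (Fin n) (Fin m) R) (B : Matrix (Fin m) (Fin n) R)
    (C : Matrix (Fin m) (Fin m) R) :
    (Matrix.fromBlocks 0 A B C).charpoly =
      Polynomial.X ^ (n - m) *
        Matrix.det
          ((Polynomial.X : Polynomial R) ^ 2 • (1 : Matrix (Fin m) (Fin m) (Polynomial R)) -
            (Polynomial.X : Polynomial R) • C.map Polynomial.C -
            (B * A).map Polynomial.C) := by
  set S : Matrix (Fin m) (Fin m) R[X] :=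
    (Polynomial.X : Polynomial R) ^ 2 • (1 : Matrix (Fin m) (Fin m) (Polynomial R)) -
      (Polynomial.X : Polynomial R) • C.map Polynomial.C - (B * A).map Polynomial.C with hS
  have h1 : charmatrix (0 : Matrix (Fin n) (Fin n) R) = (X : R[X]) • 1 := by
    ext i j
    by_cases h : i = j <;> simp [h, Matrix.one_apply, charmatrix_apply, diagonal]
  have h2 : charmatrix C = (X : R[X]) • 1 - C.map Polynomial.C := by
    ext i j
    by_cases h : i = j <;> simp [h, Matrix.one_apply, charmatrix_apply, diagonal]
  have hb12 : ((X : R[X]) • (1 : Matrix (Fin n) (Fin n) R[X])) * A.map Polynomial.C +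
      (-(A.map Polynomial.C)) * ((X : R[X]) • (1 : Matrix (Fin m) (Fin m) R[X])) = 0 := by
    rw [Matrix.smul_mul, Matrix.one_mul, Matrix.mul_smul, Matrix.mul_one]
    simp
  have hb22 : (-(B.map Polynomial.C)) * A.map Polynomial.C +
      ((X : R[X]) • (1 : Matrix (Fin m) (Fin m) R[X]) - C.map Polynomial.C) *
        ((X : R[X]) • (1 : Matrix (Fin m) (Fin m) R[X])) = S := by
    rw [Matrix.sub_mul, Matrix.smul_mul, Matrix.one_mul, Matrix.mul_smul, Matrix.mul_one,
      smul_smul, ← sq, Matrix.neg_mul, ← Matrix.map_mul, hS]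
    abel
  have key : charmatrix (fromBlocks 0 A B C) *
      fromBlocks (1 : Matrix (Fin n) (Fin n) R[X]) (A.map Polynomial.C) 0
        ((X : R[X]) • (1 : Matrix (Fin m) (Fin m) R[X])) =
      fromBlocks ((X : R[X]) • (1 : Matrix (Fin n) (Fin n) R[X])) 0
        (-(B.map Polynomial.C)) S := by
    rw [charmatrix_fromBlocks, h1, h2, fromBlocks_multiply, hb12, hb22]
    congr 1 <;> simp
  have hdet := congrArg Matrix.det key
  rw [det_mul, det_fromBlocks_zero₂₁, det_fromBlocks_zero₁₂, det_one, one_mul,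
    det_smul, det_one, det_smul, det_one, mul_one, mul_one, Fintype.card_fin] at hdet
  simp only [Fintype.card_fin] at hdet
  have hreg : IsRegular ((X : R[X]) ^ m) := isRegular_X_pow m
  apply hreg.right
  simp only [Matrix.charpoly] at hdet ⊢
  calc (charmatrix (fromBlocks 0 A B C)).det * X ^ m = X ^ n * S.det := hdet
    _ = (X ^ (n - m) * S.det) * X ^ m := by
        rw [mul_assoc, mul_comm S.det, ← mul_assoc, ← pow_add, Nat.sub_add_cancel hmn]
end

section
/- Let A be an m×m real matrix whose entries are nonnegative with all column sums equal to 1 (a probability matrix), let r ≥ 1, and let p_1,…,p_r be nonnegative reals with p_1 + … + p_r ≤ 1. Let T̄ be the (r+1)m×(r+1)m block matrix whose (i, r+1) block is p_i·A for 1 ≤ i ≤ r, whose (r+1, j) block is A for 1 ≤ j ≤ r, whose (r+1, r+1) block is (1 − Σ_{i=1}^r p_i)·A, and all of whose other blocks are zero. Then charpoly(T̄) = X^{(r−1)m} · charpoly(A) · det(X·1_m + ((Σ_{i=1}^r p_i)·A)'), where the last determinant is of an m×m matrix over ℝ[X] and ' denotes the coefficient embedding ℝ → ℝ[X]. -/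
open Polynomial Matrix Finset

theorem charpoly_probability_block_matrix (m r : ℕ) (hr : 1 ≤ r)
    (A : Matrix (Fin m) (Fin m) ℝ)
    (hA0 : ∀ i j, 0 ≤ A i j) (hA1 : ∀ j, ∑ i, A i j = 1)
    (p : ℕ → ℝ) (hp : ∀ i < r, 0 ≤ p i) (hps : ∑ i ∈ Finset.range r, p i ≤ 1) :
    Matrix.charpoly
        (Matrix.of fun q q' : Fin (r + 1) × Fin m =>
          if q'.1.val = r then
            (if q.1.val = r then (1 - ∑ i ∈ Finset.range r, p i) * A q.2 q'.2
             else p q.1.val * A q.2 q'.2)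
          else (if q.1.val = r then A q.2 q'.2 else 0)) =
      Polynomial.X ^ ((r - 1) * m) * A.charpoly *
        Matrix.det
          ((Polynomial.X : Polynomial ℝ) • (1 : Matrix (Fin m) (Fin m) (Polynomial ℝ)) +
            (((∑ i ∈ Finset.range r, p i) • A).map Polynomial.C)) := by
  classical
  set s : ℝ := ∑ i ∈ Finset.range r, p i with hs
  set T : Matrix (Fin (r + 1) × Fin m) (Fin (r + 1) × Fin m) ℝ :=
    (Matrix.of fun q q' : Fin (r + 1) × Fin m =>
      if q'.1.val = r then
        (if q.1.val = r then (1 - s) * A q.2 q'.2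
         else p q.1.val * A q.2 q'.2)
      else (if q.1.val = r then A q.2 q'.2 else 0)) with hT
  -- the reindexing equivalence
  let e0 : ((Fin r × Fin m) ⊕ (Fin 1 × Fin m)) ≃ Fin (r + 1) × Fin m :=
    (Equiv.sumProdDistrib (Fin r) (Fin 1) (Fin m)).symm.trans
      (finSumFinEquiv.prodCongr (Equiv.refl (Fin m)))
  have he0l : ∀ (i : Fin r) (k : Fin m), e0 (Sum.inl (i, k)) = (Fin.castAdd 1 i, k) := by
    intro i k; rfl
  have he0r : ∀ (u : Fin 1) (k : Fin m), e0 (Sum.inr (u, k)) = (Fin.natAdd r u, k) := by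
    intro u k; rfl
  -- block pieces
  set B₀ : Matrix (Fin r × Fin m) (Fin 1 × Fin m) ℝ :=
    Matrix.of (fun x y => p x.1.val * A x.2 y.2) with hB₀
  set C₀ : Matrix (Fin 1 × Fin m) (Fin r × Fin m) ℝ :=
    Matrix.of (fun x y => A x.2 y.2) with hC₀
  set E₀ : Matrix (Fin 1 × Fin m) (Fin 1 × Fin m) ℝ :=
    Matrix.of (fun x y => (1 - s) * A x.2 y.2) with hE₀
  have hM : T.submatrix e0 e0 = Matrix.fromBlocks 0 B₀ C₀ E₀ := by
    ext x y
    rcases x with ⟨i, k⟩ | ⟨u, k⟩ <;> rcases y with ⟨j, l⟩ | ⟨v, l⟩ <;>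
      simp only [Matrix.submatrix_apply, he0l, he0r, hT, Matrix.of_apply,
        Matrix.fromBlocks_apply₁₁, Matrix.fromBlocks_apply₁₂, Matrix.fromBlocks_apply₂₁,
        Matrix.fromBlocks_apply₂₂, Fin.coe_castAdd, Fin.coe_natAdd, Matrix.zero_apply, hB₀, hC₀,
        hE₀]
    · rw [if_neg (Nat.ne_of_lt j.isLt), if_neg (Nat.ne_of_lt i.isLt)]
    · have hv : (v : ℕ) = 0 := by omega
      rw [if_pos (by omega), if_neg (Nat.ne_of_lt i.isLt)]
    · rw [if_neg (Nat.ne_of_lt j.isLt), if_pos (by omega)]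
    · rw [if_pos (by omega), if_pos (by omega)]
  have hTc : T.charpoly = (Matrix.fromBlocks 0 B₀ C₀ E₀).charpoly := by
    rw [← hM]
    have := Matrix.charpoly_reindex e0.symm T
    rw [Matrix.reindex_apply, Equiv.symm_symm] at this
    exact this.symm
  -- now the determinant computation over ℝ[X]
  set W : Matrix (Fin r × Fin m) (Fin 1 × Fin m) ℝ[X] := B₀.map C with hW
  set Aκ : Matrix (Fin 1 × Fin m) (Fin 1 × Fin m) ℝ[X] :=
    Matrix.of (fun x y => C (A x.2 y.2)) with hAκ
  have hch0 : Matrix.charmatrix (0 : Matrix (Fin r × Fin m) (Fin r × Fin m) ℝ)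
      = (X : ℝ[X]) • 1 := by
    ext x y
    by_cases h : x = y <;>
      simp [Matrix.charmatrix_apply, Matrix.diagonal_apply, Matrix.one_apply, h]
  -- multiply by the unipotent-ish block matrix
  have key : (Matrix.fromBlocks 0 B₀ C₀ E₀).charpoly * X ^ m
      = X ^ (r * m) * Matrix.det
          ((-(C₀.map C)) * W + (X : ℝ[X]) • Matrix.charmatrix E₀) := by
    rw [Matrix.charpoly, Matrix.charmatrix_fromBlocks]
    have hdet2 : Matrix.det (Matrix.fromBlocks (1 : Matrix (Fin r × Fin m) (Fin r × Fin m) ℝ[X])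
        W 0 ((X : ℝ[X]) • (1 : Matrix (Fin 1 × Fin m) (Fin 1 × Fin m) ℝ[X]))) = X ^ m := by
      rw [Matrix.det_fromBlocks_zero₂₁, Matrix.det_one, Matrix.det_smul, Matrix.det_one]
      simp
    rw [← hdet2, ← Matrix.det_mul, Matrix.fromBlocks_multiply]
    rw [hch0]
    have h12 : ((X : ℝ[X]) • (1 : Matrix (Fin r × Fin m) (Fin r × Fin m) ℝ[X])) * W
        + (-(B₀.map C)) * ((X : ℝ[X]) • (1 : Matrix (Fin 1 × Fin m) (Fin 1 × Fin m) ℝ[X]))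
        = 0 := by
      rw [Matrix.smul_mul, Matrix.one_mul, Matrix.neg_mul, Matrix.mul_smul, Matrix.mul_one, ← smul_neg,
        ← smul_add, ← hW, add_neg_cancel, smul_zero]
    have h22 : (-(C₀.map C)) * W
        + Matrix.charmatrix E₀ * ((X : ℝ[X]) • (1 : Matrix (Fin 1 × Fin m) (Fin 1 × Fin m) ℝ[X]))
        = (-(C₀.map C)) * W + (X : ℝ[X]) • Matrix.charmatrix E₀ := by
      rw [Matrix.mul_smul, Matrix.mul_one]
    rw [h12, h22]
    have h11 : ((X : ℝ[X]) • (1 : Matrix (Fin r × Fin m) (Fin r × Fin m) ℝ[X])) * 1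
        + (-(B₀.map C)) * (0 : Matrix (Fin 1 × Fin m) (Fin r × Fin m) ℝ[X])
        = (X : ℝ[X]) • (1 : Matrix (Fin r × Fin m) (Fin r × Fin m) ℝ[X]) := by
      rw [Matrix.mul_one, Matrix.mul_zero, add_zero]
    have h21 : (-(C₀.map C)) * (1 : Matrix (Fin r × Fin m) (Fin r × Fin m) ℝ[X])
        + Matrix.charmatrix E₀ * (0 : Matrix (Fin 1 × Fin m) (Fin r × Fin m) ℝ[X])
        = -(C₀.map C) := by
      rw [Matrix.mul_one, Matrix.mul_zero, add_zero]
    rw [h11, h21, Matrix.det_fromBlocks_zero₁₂, Matrix.det_smul, Matrix.det_one]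
    simp [mul_comm]
  -- identify the lower-right block as a product
  set e2 : (Fin 1 × Fin m) ≃ Fin m := Equiv.uniqueProd (Fin m) (Fin 1) with he2
  have he2c : ∀ x : Fin 1 × Fin m, e2 x = x.2 := by intro x; rfl
  set P : Matrix (Fin m) (Fin m) ℝ[X] := Matrix.charmatrix A with hP
  set Q : Matrix (Fin m) (Fin m) ℝ[X] :=
    (X : ℝ[X]) • 1 + ((s • A).map C) with hQ
  have hsub_eq : ∀ x y : Fin 1 × Fin m, x = y ↔ x.2 = y.2 := by
    intro x y
    constructor
    · intro h; rw [h]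
    · intro h; ext
      · omega
      · exact congrArg Fin.val h
  have hLP : P.submatrix (⇑e2) (⇑e2) = (X : ℝ[X]) • 1 - Aκ := by
    ext x y
    by_cases h : x = y
    · subst h
      simp [hP, Matrix.charmatrix_apply, Matrix.one_apply, hAκ, he2c]
    · have h2 : x.2 ≠ y.2 := fun hc => h ((hsub_eq x y).2 hc)
      simp [hP, Matrix.charmatrix_apply, Matrix.diagonal_apply, Matrix.one_apply, hAκ, he2c, h,
        h2]
  have hLQ : Q.submatrix (⇑e2) (⇑e2) = (X : ℝ[X]) • 1 + C s • Aκ := by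
    ext x y
    by_cases h : x = y
    · subst h
      simp [hQ, Matrix.one_apply, hAκ, he2c, _root_.map_mul]
    · have h2 : x.2 ≠ y.2 := fun hc => h ((hsub_eq x y).2 hc)
      simp [hQ, Matrix.one_apply, hAκ, he2c, h, h2, _root_.map_mul]
  -- the product over ℝ
  have hC₀B₀ : C₀ * B₀ = Matrix.of (fun x y : Fin 1 × Fin m => s * (A * A) x.2 y.2) := by
    ext x y
    rw [Matrix.mul_apply, Fintype.sum_prod_type, Finset.sum_comm, Matrix.of_apply,
      Matrix.mul_apply, Finset.mul_sum]
    refine Finset.sum_congr rfl fun t _ => ?_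
    rw [hs, ← Fin.sum_univ_eq_sum_range (fun i => p i) r, Finset.sum_mul]
    exact Finset.sum_congr rfl (fun j _ => by simp [hB₀, hC₀]; ring)
  have hAκAκ : Aκ * Aκ = Matrix.of (fun x y : Fin 1 × Fin m => C ((A * A) x.2 y.2)) := by
    refine Matrix.ext fun x y => ?_
    rw [Matrix.mul_apply, Fintype.sum_prod_type, Fin.sum_univ_one, Matrix.of_apply,
      Matrix.mul_apply, map_sum]
    exact Finset.sum_congr rfl (fun t _ => by simp [hAκ, _root_.map_mul])
  have hCW : (-(C₀.map C)) * W = -(C s • (Aκ * Aκ)) := by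
    rw [hW, Matrix.neg_mul, ← Matrix.map_mul, hC₀B₀, hAκAκ]
    ext x y
    simp [_root_.map_mul]
  have hchE : Matrix.charmatrix E₀ = (X : ℝ[X]) • 1 - C (1 - s) • Aκ := by
    ext x y
    by_cases h : x = y
    · subst h
      simp [hE₀, Matrix.charmatrix_apply, Matrix.one_apply, hAκ, _root_.map_mul]
    · have h2 : x.2 ≠ y.2 := fun hc => h ((hsub_eq x y).2 hc)
      simp [hE₀, Matrix.charmatrix_apply, Matrix.diagonal_apply, Matrix.one_apply, hAκ, h, h2,
        _root_.map_mul]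
  have hFact : (-(C₀.map C)) * W + (X : ℝ[X]) • Matrix.charmatrix E₀
      = ((X : ℝ[X]) • 1 - Aκ) * ((X : ℝ[X]) • 1 + C s • Aκ) := by
    rw [hCW, hchE]
    simp only [sub_mul, mul_add, smul_mul_assoc, mul_smul_comm, one_mul, mul_one, smul_sub,
      smul_smul, smul_add]
    rw [map_sub, _root_.map_one]
    module
  have hdetF : Matrix.det ((-(C₀.map C)) * W + (X : ℝ[X]) • Matrix.charmatrix E₀)
      = A.charpoly * Matrix.det Q := by
    rw [hFact, ← hLP, ← hLQ, Matrix.submatrix_mul_equiv, Matrix.det_submatrix_equiv_self,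
      Matrix.det_mul, hP, Matrix.charpoly]
  -- assemble
  have hmain : T.charpoly * X ^ m
      = (X ^ ((r - 1) * m) * A.charpoly * Matrix.det Q) * X ^ m := by
    rw [hTc, key, hdetF]
    have hrm : r * m = (r - 1) * m + m := by
      have h1 : r - 1 + 1 = r := Nat.succ_pred_eq_of_pos hr
      calc r * m = ((r - 1) + 1) * m := by rw [h1]
        _ = (r - 1) * m + m := by ring
    rw [hrm, pow_add]
    ring
  have hX : (X : ℝ[X]) ^ m ≠ 0 := pow_ne_zero _ Polynomial.X_ne_zero
  exact mul_right_cancel₀ hX hmain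
end

section
/- Let n ≥ 1, let C be a finite type, and let f : E_n → C be a surjective classification map. For each τ with 0 ≤ τ ≤ n, define the rational matrix T̄(τ) indexed by C × C with entry T̄(τ)_{i,j} = (number of pairs (μ,η) with μ,η ∈ E_n, f(μ) = j, η of weight τ, and f(μ+η) = i) divided by (|f⁻¹(j)| · binomial(n,τ)), and define the vector v : C → ℚ by v_i = |f⁻¹(i)| / 2^n. Let p : ℕ → ℚ satisfy p(τ) ≥ 0 for all τ and Σ_{τ=0}^n p(τ) = 1. Then the uniform distribution v is a steady state of the Markov matrix Σ_{τ=0}^n p(τ)·T̄(τ): that is, (Σ_{τ=0}^n p(τ)·T̄(τ)) · v = v. -/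
/-- `T̄(τ)`: the class transition probability matrix induced by the classification
map `f` under `τ`-point mutations.  The `(i,j)` entry is the number of pairs `(μ,η)`
with `f μ = j`, `η` of weight `τ` and `f (μ+η) = i`, divided by `|f⁻¹(j)| · C(n,τ)`. -/
def classMatrix (n : ℕ) {C : Type*} [Fintype C] [DecidableEq C]
    (f : (Fin n → ZMod 2) → C) (τ : ℕ) : Matrix C C ℚ :=
  Matrix.of fun i j =>
    ((Finset.univ.filter fun q : (Fin n → ZMod 2) × (Fin n → ZMod 2) =>
        f q.1 = j ∧ weight q.2 = τ ∧ f (q.1 + q.2) = i).card : ℚ) /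
      (((Finset.univ.filter fun μ : Fin n → ZMod 2 => f μ = j).card : ℚ) *
        (n.choose τ : ℚ))

/-- The uniform distribution on classes: `v i = |f⁻¹(i)| / 2^n`. -/
def uniformVec (n : ℕ) {C : Type*} [Fintype C] [DecidableEq C]
    (f : (Fin n → ZMod 2) → C) : C → ℚ :=
  fun i => ((Finset.univ.filter fun μ : Fin n → ZMod 2 => f μ = i).card : ℚ) / 2 ^ n

lemma zmod2_add_add (a b : ZMod 2) : a + b + b = a := by revert a b; decide

lemma fun_add_add {n : ℕ} (μ η : Fin n → ZMod 2) : μ + η + η = μ := by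
  funext k; exact zmod2_add_add (μ k) (η k)

/-- Number of strings of weight `τ` is `C(n,τ)`. -/
lemma card_weight_eq (n τ : ℕ) :
    (Finset.univ.filter fun η : Fin n → ZMod 2 => weight η = τ).card = n.choose τ := by
  have h := Finset.card_powersetCard τ (Finset.univ : Finset (Fin n))
  rw [Finset.card_univ, Fintype.card_fin] at h
  rw [← h]
  apply Finset.card_bij (fun η _ => Finset.univ.filter fun i => η i = 1)
  · intro η hη
    simp only [Finset.mem_filter, Finset.mem_univ, true_and] at hη
    simp [Finset.mem_powersetCard, ← hη, weight]
  · intro a ha b hb hab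
    funext k
    have : ∀ x : ZMod 2, x = 0 ∨ x = 1 := by decide
    have hk := Finset.ext_iff.mp hab k
    simp only [Finset.mem_filter, Finset.mem_univ, true_and] at hk
    rcases this (a k) with h1 | h1 <;> rcases this (b k) with h2 | h2 <;>
      simp_all
  · intro s hs
    refine ⟨fun i => if i ∈ s then 1 else 0, ?_, ?_⟩
    · simp only [Finset.mem_powersetCard] at hs
      rw [Finset.mem_filter]
      simp only [Finset.mem_univ, true_and, weight]
      rw [← hs.2]
      congr 1
      ext i
      simp only [Finset.mem_filter, Finset.mem_univ, true_and]
      by_cases h : i ∈ s <;> simp [h]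
    · ext i
      simp only [Finset.mem_filter, Finset.mem_univ, true_and]
      by_cases h : i ∈ s <;> simp [h]

lemma pair_count (n τ : ℕ) {C : Type*} [Fintype C] [DecidableEq C]
    (f : (Fin n → ZMod 2) → C) (i : C) :
    (Finset.univ.filter fun q : (Fin n → ZMod 2) × (Fin n → ZMod 2) =>
        weight q.2 = τ ∧ f (q.1 + q.2) = i).card =
      n.choose τ * (Finset.univ.filter fun μ : Fin n → ZMod 2 => f μ = i).card := by
  rw [← card_weight_eq n τ, ← Finset.card_product]
  apply Finset.card_bij' (fun q _ => (q.2, q.1 + q.2)) (fun r _ => (r.2 + r.1, r.1)) <;>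
    intro q hq <;> simp_all [Finset.mem_product, fun_add_add, Prod.ext_iff]

/-- Fiberwise decomposition of the pair count over the class of `q.1`. -/
lemma sum_pair_count (n τ : ℕ) {C : Type*} [Fintype C] [DecidableEq C]
    (f : (Fin n → ZMod 2) → C) (i : C) :
    ∑ j : C, (Finset.univ.filter fun q : (Fin n → ZMod 2) × (Fin n → ZMod 2) =>
        f q.1 = j ∧ weight q.2 = τ ∧ f (q.1 + q.2) = i).card =
      n.choose τ * (Finset.univ.filter fun μ : Fin n → ZMod 2 => f μ = i).card := by
  rw [← pair_count n τ f i]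
  rw [Finset.card_eq_sum_card_fiberwise
    (f := fun q : (Fin n → ZMod 2) × (Fin n → ZMod 2) => f q.1)
    (t := Finset.univ) (fun x _ => Finset.mem_univ _)]
  apply Finset.sum_congr rfl
  intro j _
  congr 1
  rw [Finset.filter_filter]
  apply Finset.filter_congr
  intro q _
  tauto

lemma single_steady (n τ : ℕ) (hτ : τ ≤ n) {C : Type*} [Fintype C]
    [DecidableEq C] (f : (Fin n → ZMod 2) → C) (hf : Function.Surjective f) :
    (classMatrix n f τ).mulVec (uniformVec n f) = uniformVec n f := by
  have hch : (n.choose τ : ℚ) ≠ 0 := by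
    exact_mod_cast (Nat.choose_pos hτ).ne'
  have hcj : ∀ j : C, ((Finset.univ.filter fun μ : Fin n → ZMod 2 => f μ = j).card : ℚ) ≠ 0 := by
    intro j
    obtain ⟨μ, hμ⟩ := hf j
    have : μ ∈ Finset.univ.filter fun μ : Fin n → ZMod 2 => f μ = j := by simp [hμ]
    have hpos := Finset.card_pos.mpr ⟨μ, this⟩
    exact_mod_cast hpos.ne'
  funext i
  simp only [Matrix.mulVec, dotProduct, classMatrix, uniformVec, Matrix.of_apply]
  have step : ∀ j : C,
      ((Finset.univ.filter fun q : (Fin n → ZMod 2) × (Fin n → ZMod 2) =>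
          f q.1 = j ∧ weight q.2 = τ ∧ f (q.1 + q.2) = i).card : ℚ) /
        (((Finset.univ.filter fun μ : Fin n → ZMod 2 => f μ = j).card : ℚ) *
          (n.choose τ : ℚ)) *
        (((Finset.univ.filter fun μ : Fin n → ZMod 2 => f μ = j).card : ℚ) / 2 ^ n) =
      ((Finset.univ.filter fun q : (Fin n → ZMod 2) × (Fin n → ZMod 2) =>
          f q.1 = j ∧ weight q.2 = τ ∧ f (q.1 + q.2) = i).card : ℚ) /
        ((n.choose τ : ℚ) * 2 ^ n) := by
    intro j
    rw [div_mul_div_comm,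
      mul_comm ((Finset.univ.filter fun q : (Fin n → ZMod 2) × (Fin n → ZMod 2) =>
          f q.1 = j ∧ weight q.2 = τ ∧ f (q.1 + q.2) = i).card : ℚ)
        ((Finset.univ.filter fun μ : Fin n → ZMod 2 => f μ = j).card : ℚ),
      mul_assoc, mul_div_mul_left _ _ (hcj j)]
  rw [Finset.sum_congr rfl fun j _ => step j, ← Finset.sum_div, ← Nat.cast_sum,
    sum_pair_count n τ f i]
  push_cast
  field_simp

theorem uniform_is_steady_state (n : ℕ) (hn : 1 ≤ n) (C : Type*) [Fintype C]
    [DecidableEq C] (f : (Fin n → ZMod 2) → C) (hf : Function.Surjective f)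
    (p : ℕ → ℚ) (hp : ∀ τ, 0 ≤ p τ) (hps : ∑ τ ∈ Finset.range (n + 1), p τ = 1) :
    (∑ τ ∈ Finset.range (n + 1), p τ • classMatrix n f τ).mulVec (uniformVec n f) =
      uniformVec n f := by
  funext i
  have expand : (∑ τ ∈ Finset.range (n + 1), p τ • classMatrix n f τ).mulVec
      (uniformVec n f) i =
      ∑ τ ∈ Finset.range (n + 1),
        p τ * (classMatrix n f τ).mulVec (uniformVec n f) i := by
    simp only [Matrix.mulVec, dotProduct, Matrix.sum_apply, Finset.sum_apply,
      Matrix.smul_apply, smul_eq_mul, Finset.sum_mul, Finset.mul_sum]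
    rw [Finset.sum_comm]
    apply Finset.sum_congr rfl
    intro τ _
    apply Finset.sum_congr rfl
    intro j _
    ring
  rw [expand]
  have : ∀ τ ∈ Finset.range (n + 1),
      p τ * (classMatrix n f τ).mulVec (uniformVec n f) i = p τ * uniformVec n f i := by
    intro τ hτ
    rw [single_steady n τ (Nat.lt_succ_iff.mp (Finset.mem_range.mp hτ)) f hf]
  rw [Finset.sum_congr rfl this, ← Finset.sum_mul, hps, one_mul]
end
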